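/- arXiv:2412.06233 — 2 statements merged into one kernel-verified Lean document; each statement's English description precedes it below -/
import Mathlib

section
/- Let U ∈ ℝ^{p×p₀} have orthonormal columns, let U₁,…,U_K with U_k ∈ ℝ^{p×r_k} have orthonormal columns, let w₁,…,w_K ≥ 0 with Σ_k w_k = 1, and suppose the representational similarity condition ‖(I_p − UUᵀ)U_k‖_F ≤ h holds for every k. Then for every unit vector w ∈ ℝ^p orthogonal to the column span of U (i.e., Uᵀw = 0), the barycenter matrix Σ := Σ_k w_k U_kU_kᵀ satisfies wᵀΣw ≤ h². (Hence any eigenvalue of Σ whose eigenvector is orthogonal to span(U) is at most h², quantifying the eigengap used to recover span(U).) -/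
open Matrix

/-- Frobenius norm of a real matrix. -/
noncomputable def frobNorm {m n : ℕ} (A : Matrix (Fin m) (Fin n) ℝ) : ℝ :=
  Real.sqrt (Matrix.trace (Aᵀ * A))

lemma frob_sq {m n : ℕ} (A : Matrix (Fin m) (Fin n) ℝ) :
    (frobNorm A) ^ 2 = ∑ j, ∑ i, (A i j) ^ 2 := by
  have htr : Matrix.trace (Aᵀ * A) = ∑ j, ∑ i, (A i j) ^ 2 := by
    simp [Matrix.trace, Matrix.diag, Matrix.mul_apply, sq]
  have hnn : 0 ≤ ∑ j, ∑ i, (A i j) ^ 2 :=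
    Finset.sum_nonneg fun j _ => Finset.sum_nonneg fun i _ => sq_nonneg _
  rw [frobNorm, htr, Real.sq_sqrt hnn]

lemma key_bound {m n : ℕ} (B : Matrix (Fin m) (Fin n) ℝ) (w : Fin m → ℝ)
    (hw : w ⬝ᵥ w = 1) :
    (Bᵀ.mulVec w) ⬝ᵥ (Bᵀ.mulVec w) ≤ (frobNorm B) ^ 2 := by
  rw [frob_sq]
  have hv : (Bᵀ.mulVec w) ⬝ᵥ (Bᵀ.mulVec w) = ∑ j, (∑ i, B i j * w i) ^ 2 := by
    simp [dotProduct, Matrix.mulVec, sq]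
  rw [hv]
  refine Finset.sum_le_sum fun j _ => ?_
  have hcs := Finset.sum_mul_sq_le_sq_mul_sq Finset.univ (fun i => B i j) w
  have hw' : ∑ i, w i ^ 2 = 1 := by
    have : w ⬝ᵥ w = ∑ i, w i ^ 2 := by simp [dotProduct, sq]
    rw [← this, hw]
  calc (∑ i, B i j * w i) ^ 2 ≤ (∑ i, B i j ^ 2) * (∑ i, w i ^ 2) := hcs
    _ = ∑ i, B i j ^ 2 := by rw [hw']; ring

/-- Under the representational similarity condition ‖(I − UUᵀ)U_k‖_F ≤ h, every unit
vector w orthogonal to span(U) satisfies wᵀΣw ≤ h² for the barycenter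
Σ = Σ_k w_k U_kU_kᵀ. -/
theorem barycenter_orthogonal_quadratic_form_le {p p₀ K : ℕ} (r : Fin K → ℕ)
    (U : Matrix (Fin p) (Fin p₀) ℝ) (hU : Uᵀ * U = 1)
    (Uk : ∀ k : Fin K, Matrix (Fin p) (Fin (r k)) ℝ)
    (hUk : ∀ k, (Uk k)ᵀ * Uk k = 1)
    (wgt : Fin K → ℝ) (hwgt : ∀ k, 0 ≤ wgt k) (hwgt1 : ∑ k, wgt k = 1)
    (h : ℝ)
    (hsim : ∀ k, frobNorm ((1 - U * Uᵀ) * Uk k) ≤ h)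
    (Sig : Matrix (Fin p) (Fin p) ℝ)
    (hSig : Sig = ∑ k, wgt k • (Uk k * (Uk k)ᵀ)) :
    ∀ w : Fin p → ℝ, w ⬝ᵥ w = 1 → Uᵀ.mulVec w = 0 →
      w ⬝ᵥ Sig.mulVec w ≤ h ^ 2 := by
  intro w hw hUw
  -- K = 0 contradicts ∑ wgt = 1
  rcases Nat.eq_zero_or_pos K with hK | hK
  · subst hK; simp at hwgt1
  have k0 : Fin K := ⟨0, hK⟩
  have h0 : 0 ≤ h := le_trans (Real.sqrt_nonneg _) (hsim k0)
  -- each term bound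
  have hterm : ∀ k, w ⬝ᵥ (Uk k * (Uk k)ᵀ).mulVec w ≤ h ^ 2 := by
    intro k
    set B : Matrix (Fin p) (Fin (r k)) ℝ := (1 - U * Uᵀ) * Uk k with hB
    have hBt : Bᵀ.mulVec w = (Uk k)ᵀ.mulVec w := by
      have hP : (1 - U * Uᵀ).mulVec w = w := by
        rw [Matrix.sub_mulVec, Matrix.one_mulVec, ← Matrix.mulVec_mulVec, hUw,
          Matrix.mulVec_zero, sub_zero]
      rw [hB, Matrix.transpose_mul, Matrix.transpose_sub, Matrix.transpose_one,
        Matrix.transpose_mul, Matrix.transpose_transpose, ← Matrix.mulVec_mulVec, hP]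
    have hquad : w ⬝ᵥ (Uk k * (Uk k)ᵀ).mulVec w
        = ((Uk k)ᵀ.mulVec w) ⬝ᵥ ((Uk k)ᵀ.mulVec w) := by
      rw [← Matrix.mulVec_mulVec, Matrix.dotProduct_mulVec, ← Matrix.mulVec_transpose]
    rw [hquad, ← hBt]
    calc (Bᵀ.mulVec w) ⬝ᵥ (Bᵀ.mulVec w) ≤ (frobNorm B) ^ 2 := key_bound B w hw
      _ ≤ h ^ 2 := by
          apply pow_le_pow_left₀ (Real.sqrt_nonneg _) (hsim k)
  have hterm0 : ∀ k, 0 ≤ w ⬝ᵥ (Uk k * (Uk k)ᵀ).mulVec w := by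
    intro k
    have hquad : w ⬝ᵥ (Uk k * (Uk k)ᵀ).mulVec w
        = ((Uk k)ᵀ.mulVec w) ⬝ᵥ ((Uk k)ᵀ.mulVec w) := by
      rw [← Matrix.mulVec_mulVec, Matrix.dotProduct_mulVec, ← Matrix.mulVec_transpose]
    rw [hquad]
    exact Finset.sum_nonneg fun i _ => mul_self_nonneg _
  -- expand Sig
  have hexp : w ⬝ᵥ Sig.mulVec w = ∑ k, wgt k * (w ⬝ᵥ (Uk k * (Uk k)ᵀ).mulVec w) := by
    subst hSig
    have hsum : (∑ k, wgt k • (Uk k * (Uk k)ᵀ)) *ᵥ w = ∑ k, (wgt k • (Uk k * (Uk k)ᵀ)) *ᵥ w := by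
      ext x
      simp only [Matrix.mulVec, dotProduct, Matrix.sum_apply, Finset.sum_apply,
        Finset.sum_mul]
      exact Finset.sum_comm
    have hdsum : w ⬝ᵥ ∑ k, (wgt k • (Uk k * (Uk k)ᵀ)) *ᵥ w
        = ∑ k, w ⬝ᵥ (wgt k • (Uk k * (Uk k)ᵀ)) *ᵥ w := by
      simp only [dotProduct, Finset.sum_apply, Finset.mul_sum]
      exact Finset.sum_comm
    rw [hsum, hdsum]
    refine Finset.sum_congr rfl fun k _ => ?_
    rw [Matrix.smul_mulVec, dotProduct_smul, smul_eq_mul]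
  rw [hexp]
  calc ∑ k, wgt k * (w ⬝ᵥ (Uk k * (Uk k)ᵀ).mulVec w)
      ≤ ∑ k, wgt k * h ^ 2 :=
        Finset.sum_le_sum fun k _ => mul_le_mul_of_nonneg_left (hterm k) (hwgt k)
    _ = h ^ 2 := by rw [← Finset.sum_mul, hwgt1, one_mul]
end

section
/- (Representation approximation bias, source of the h² term.) Let Θ = WΛZᵀ ∈ ℝ^{p×q} with W ∈ ℝ^{p×r}, Z ∈ ℝ^{q×r} having orthonormal columns and Λ ∈ ℝ^{r×r}. Let U ∈ ℝ^{p×p₀} and V ∈ ℝ^{q×q₀} have orthonormal columns. Then ‖Θ − UUᵀΘVVᵀ‖_F ≤ ‖Λ‖_op ( ‖(I_p − UUᵀ)W‖_F + ‖(I_q − VVᵀ)Z‖_F ), where ‖Λ‖_op denotes the operator (spectral) norm of Λ. -/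
/-!
Write `P = UUᵀ` and `Q = VVᵀ`. Then `Θ - PΘQ = (1 - P)Θ + PΘ(1 - Q)`, and with `Θ = WΛZᵀ` the two
terms are `((1 - P)W)(ΛZᵀ)` and `(PWΛ)((1 - Q)Z)ᵀ`. The Frobenius norm of a product is at most the
Frobenius norm of one factor times the operator norm of the other, and `Zᵀ`, `P`, `W` have
operator norm at most one, so each term is bounded by `‖Λ‖_op` times one subspace dissimilarity.
-/

open Matrix

/-- Operator (spectral) norm of a real matrix. -/
noncomputable def opNorm {m n : ℕ} (A : Matrix (Fin m) (Fin n) ℝ) : ℝ :=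
  ‖LinearMap.toContinuousLinearMap (Matrix.toEuclideanLin A)‖

section L2OpNorm

open scoped Matrix.Norms.L2Operator

theorem Matrix.l2_opNorm_le_one_of_conjTranspose_mul_self_eq_one {𝕜 m n : Type*} [RCLike 𝕜]
    [Fintype m] [Fintype n] [DecidableEq n] {A : Matrix m n 𝕜} (hA : Aᴴ * A = 1) :
    ‖A‖ ≤ 1 := by
  have h_one : ‖(1 : Matrix n n 𝕜)‖ ≤ 1 := by
    rw [← diagonal_one, l2_opNorm_diagonal]
    exact (pi_norm_le_iff_of_nonneg zero_le_one).2 fun _ => norm_one.le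
  have h_sq := l2_opNorm_conjTranspose_mul_self A
  rw [hA] at h_sq
  nlinarith [norm_nonneg A]

variable {m n k : ℕ}

theorem opNorm_nonneg (A : Matrix (Fin m) (Fin n) ℝ) : 0 ≤ opNorm A :=
  norm_nonneg _

theorem opNorm_transpose (A : Matrix (Fin m) (Fin n) ℝ) : opNorm Aᵀ = opNorm A := by
  have h := l2_opNorm_conjTranspose A
  rwa [conjTranspose_eq_transpose_of_trivial] at h

theorem opNorm_mul_le (A : Matrix (Fin m) (Fin n) ℝ) (B : Matrix (Fin n) (Fin k) ℝ) :
    opNorm (A * B) ≤ opNorm A * opNorm B :=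
  l2_opNorm_mul A B

theorem opNorm_le_one_of_transpose_mul_self_eq_one {A : Matrix (Fin m) (Fin n) ℝ}
    (hA : Aᵀ * A = 1) : opNorm A ≤ 1 :=
  l2_opNorm_le_one_of_conjTranspose_mul_self_eq_one (by rwa [conjTranspose_eq_transpose_of_trivial])

theorem opNorm_mul_le_of_opNorm_le_one_left {A : Matrix (Fin m) (Fin n) ℝ}
    (hA : opNorm A ≤ 1) (B : Matrix (Fin n) (Fin k) ℝ) : opNorm (A * B) ≤ opNorm B :=
  (opNorm_mul_le A B).trans (mul_le_of_le_one_left (opNorm_nonneg B) hA)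

theorem opNorm_mul_le_of_opNorm_le_one_right (A : Matrix (Fin m) (Fin n) ℝ)
    {B : Matrix (Fin n) (Fin k) ℝ} (hB : opNorm B ≤ 1) : opNorm (A * B) ≤ opNorm A :=
  (opNorm_mul_le A B).trans (mul_le_of_le_one_right (opNorm_nonneg A) hB)

theorem frobNorm_nonneg (A : Matrix (Fin m) (Fin n) ℝ) : 0 ≤ frobNorm A :=
  Real.sqrt_nonneg _

theorem frobNorm_transpose (A : Matrix (Fin m) (Fin n) ℝ) : frobNorm Aᵀ = frobNorm A := by
  rw [frobNorm, frobNorm, transpose_transpose, trace_mul_comm]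

theorem frobNorm_sq_eq_sum_col (A : Matrix (Fin m) (Fin n) ℝ) :
    frobNorm A ^ 2 = ∑ j, ‖(EuclideanSpace.equiv (Fin m) ℝ).symm (Aᵀ j)‖ ^ 2 := by
  have h_trace : trace (Aᵀ * A) = ∑ j, ‖(EuclideanSpace.equiv (Fin m) ℝ).symm (Aᵀ j)‖ ^ 2 := by
    simp only [EuclideanSpace.norm_sq_eq, Real.norm_eq_abs, sq_abs]
    simp [trace, mul_apply, sq]
  rw [frobNorm, h_trace, Real.sq_sqrt (by positivity)]

theorem frobNorm_mul_le_opNorm_mul_frobNorm (A : Matrix (Fin m) (Fin n) ℝ)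
    (B : Matrix (Fin n) (Fin k) ℝ) : frobNorm (A * B) ≤ opNorm A * frobNorm B := by
  have h_col (j : Fin k) : (A * B)ᵀ j = A *ᵥ Bᵀ j := by
    ext i; simp [mul_apply, mulVec, dotProduct]
  refine (pow_le_pow_iff_left₀ (frobNorm_nonneg _)
    (mul_nonneg (opNorm_nonneg A) (frobNorm_nonneg B)) two_ne_zero).1 ?_
  rw [mul_pow, frobNorm_sq_eq_sum_col, frobNorm_sq_eq_sum_col, Finset.mul_sum]
  refine Finset.sum_le_sum fun j _ => ?_
  rw [h_col, ← mul_pow]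
  exact pow_le_pow_left₀ (norm_nonneg _) (l2_opNorm_mulVec A _) 2

theorem frobNorm_mul_le_frobNorm_mul_opNorm (A : Matrix (Fin m) (Fin n) ℝ)
    (B : Matrix (Fin n) (Fin k) ℝ) : frobNorm (A * B) ≤ frobNorm A * opNorm B := by
  rw [← frobNorm_transpose, transpose_mul, mul_comm, ← frobNorm_transpose A, ← opNorm_transpose B]
  exact frobNorm_mul_le_opNorm_mul_frobNorm _ _

end L2OpNorm

section Frobenius

attribute [local instance] Matrix.frobeniusSeminormedAddCommGroup

variable {m n : ℕ}

theorem frobNorm_eq_norm (A : Matrix (Fin m) (Fin n) ℝ) : frobNorm A = ‖A‖ := by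
  rw [frobenius_norm_def, frobNorm, ← Real.sqrt_eq_rpow, Finset.sum_comm]
  simp [trace, mul_apply, Real.norm_eq_abs, sq]

theorem frobNorm_add_le (A B : Matrix (Fin m) (Fin n) ℝ) :
    frobNorm (A + B) ≤ frobNorm A + frobNorm B := by
  simpa only [frobNorm_eq_norm] using norm_add_le A B

end Frobenius

theorem representation_approximation_bias_general {p q p₀ q₀ r : ℕ}
    (W : Matrix (Fin p) (Fin r) ℝ) (Z : Matrix (Fin q) (Fin r) ℝ)
    (Λ : Matrix (Fin r) (Fin r) ℝ)
    (hW : Wᵀ * W = 1) (hZ : Zᵀ * Z = 1)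
    (Θ : Matrix (Fin p) (Fin q) ℝ) (hΘ : Θ = W * Λ * Zᵀ)
    (U : Matrix (Fin p) (Fin p₀) ℝ) (V : Matrix (Fin q) (Fin q₀) ℝ)
    (hU : Uᵀ * U = 1) :
    frobNorm (Θ - U * Uᵀ * Θ * V * Vᵀ) ≤
      opNorm Λ * (frobNorm ((1 - U * Uᵀ) * W) + frobNorm ((1 - V * Vᵀ) * Z)) := by
  have h_split : Θ - U * Uᵀ * Θ * V * Vᵀ =
      (1 - U * Uᵀ) * W * (Λ * Zᵀ) + U * (Uᵀ * (W * Λ)) * ((1 - V * Vᵀ) * Z)ᵀ := by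
    simp only [hΘ, transpose_mul, transpose_sub, transpose_transpose,
      Matrix.sub_mul, Matrix.mul_sub, Matrix.one_mul, Matrix.mul_assoc]
    abel
  have h_left : opNorm (Λ * Zᵀ) ≤ opNorm Λ := opNorm_mul_le_of_opNorm_le_one_right Λ <| by
    rw [opNorm_transpose]; exact opNorm_le_one_of_transpose_mul_self_eq_one hZ
  have h_right : opNorm (U * (Uᵀ * (W * Λ))) ≤ opNorm Λ := by
    have hU₁ := opNorm_le_one_of_transpose_mul_self_eq_one hU
    refine (opNorm_mul_le_of_opNorm_le_one_left hU₁ _).trans <|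
      (opNorm_mul_le_of_opNorm_le_one_left (by rwa [opNorm_transpose]) _).trans <|
      opNorm_mul_le_of_opNorm_le_one_left (opNorm_le_one_of_transpose_mul_self_eq_one hW) _
  rw [h_split, mul_add]
  refine (frobNorm_add_le _ _).trans (add_le_add ?_ ?_)
  · calc frobNorm ((1 - U * Uᵀ) * W * (Λ * Zᵀ))
        ≤ frobNorm ((1 - U * Uᵀ) * W) * opNorm (Λ * Zᵀ) := frobNorm_mul_le_frobNorm_mul_opNorm _ _
      _ ≤ opNorm Λ * frobNorm ((1 - U * Uᵀ) * W) := by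
        rw [mul_comm]; exact mul_le_mul_of_nonneg_right h_left (frobNorm_nonneg _)
  · calc frobNorm (U * (Uᵀ * (W * Λ)) * ((1 - V * Vᵀ) * Z)ᵀ)
        ≤ opNorm (U * (Uᵀ * (W * Λ))) * frobNorm ((1 - V * Vᵀ) * Z)ᵀ :=
          frobNorm_mul_le_opNorm_mul_frobNorm _ _
      _ ≤ opNorm Λ * frobNorm ((1 - V * Vᵀ) * Z) := by
        rw [frobNorm_transpose]; exact mul_le_mul_of_nonneg_right h_right (frobNorm_nonneg _)

/-- Representation approximation bias (source of the h² term): for Θ = WΛZᵀ with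
column-orthonormal W, Z and column-orthonormal U, V,
‖Θ − UUᵀΘVVᵀ‖_F ≤ ‖Λ‖_op (‖(I − UUᵀ)W‖_F + ‖(I − VVᵀ)Z‖_F). -/
theorem representation_approximation_bias {p q p₀ q₀ r : ℕ}
    (W : Matrix (Fin p) (Fin r) ℝ) (Z : Matrix (Fin q) (Fin r) ℝ)
    (Λ : Matrix (Fin r) (Fin r) ℝ)
    (hW : Wᵀ * W = 1) (hZ : Zᵀ * Z = 1)
    (Θ : Matrix (Fin p) (Fin q) ℝ) (hΘ : Θ = W * Λ * Zᵀ)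
    (U : Matrix (Fin p) (Fin p₀) ℝ) (V : Matrix (Fin q) (Fin q₀) ℝ)
    (hU : Uᵀ * U = 1) (hV : Vᵀ * V = 1) :
    frobNorm (Θ - U * Uᵀ * Θ * V * Vᵀ) ≤
      opNorm Λ * (frobNorm ((1 - U * Uᵀ) * W) + frobNorm ((1 - V * Vᵀ) * Z)) :=
  representation_approximation_bias_general W Z Λ hW hZ Θ hΘ U V hU
end
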